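/- arXiv:1904.10339 — 2 statements merged into one kernel-verified Lean document; each statement's English description precedes it below -/
import Mathlib

section
/- Let n, m, k, r be positive integers, S_1,…,S_r ∈ ℝ^{n×n}, X ∈ ℝ^{n×m}, E ∈ ℝ^{m×m}. Let P ∈ ℝ^{n²×r} have ℓ-th column vec(S_ℓ), let U = [((XE^{k−1})ᵀ ⊗ I_n)P, …, (Xᵀ ⊗ I_n)P] ∈ ℝ^{mn×kr}, b = vec(−XE^k), and let U† ∈ ℝ^{kr×mn} be a Moore–Penrose pseudoinverse of U. Then there exist coefficient vectors α_0,…,α_{k−1} ∈ ℝ^r such that the matrices A_i = Σ_{ℓ=1}^r α_i(ℓ) S_ℓ satisfy X E^k + Σ_{i=0}^{k−1} A_i X E^i = 0 if and only if U(U†b) = b. -/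
/-!
The identity vec(A Y B) = (Bᵀ ⊗ A) vec Y shows that column (j, ℓ) of `U` is vec(S_ℓ X E^(k-1-j)),
so `U x = b` is exactly the matrix equation with α_i(ℓ) = x(k-1-i, ℓ). Solvability of `U x = b` is
then decided by any inner inverse `G` of `U` (i.e. `U G U = U`): a solution `x` gives
`U (G b) = U G U x = U x = b`.
-/

open Matrix
open scoped Kronecker

/-- Column-stacking vectorization: `vecc C (j, i) = C i j`. -/
def vecc {n m : ℕ} (C : Matrix (Fin n) (Fin m) ℝ) : Fin m × Fin n → ℝ :=
  fun ji => C ji.2 ji.1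

theorem vecc_eq_vec {n m : ℕ} : (vecc : Matrix (Fin n) (Fin m) ℝ → _) = vec := rfl

namespace Matrix

variable {R ι m n p q : Type*}

theorem exists_mulVec_eq_iff_of_mul_mul_self [NonUnitalSemiring R] [Fintype m] [Fintype n]
    {A : Matrix m n R} {G : Matrix n m R} (hG : A * G * A = A) (b : m → R) :
    (∃ x, A *ᵥ x = b) ↔ A *ᵥ (G *ᵥ b) = b := by
  refine ⟨fun ⟨x, hx⟩ => ?_, fun h => ⟨G *ᵥ b, h⟩⟩
  rw [← hx, mulVec_mulVec, mulVec_mulVec, hG]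

theorem mulVec_eq_vec_sum_of_col_eq_vec [CommSemiring R] [Fintype ι]
    {U : Matrix (n × m) ι R} {M : ι → Matrix m n R} (hU : ∀ i c, U i c = vec (M c) i)
    (x : ι → R) : U *ᵥ x = vec (∑ c, x c • M c) := by
  ext i
  simp only [mulVec, dotProduct, hU, vec_sum, vec_smul, Finset.sum_apply, Pi.smul_apply,
    smul_eq_mul, mul_comm]

theorem kronecker_one_mul_apply_of_col_eq_vec [CommSemiring R] [Fintype n] [Fintype p]
    [DecidableEq n] {P : Matrix (p × n) ι R} {S : ι → Matrix n p R}
    (hP : ∀ c, (fun i => P i c) = vec (S c)) (B : Matrix p q R) (i : q × n) (c : ι) :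
    ((Bᵀ ⊗ₖ (1 : Matrix n n R)) * P) i c = vec (S c * B) i := by
  have h := congrFun (kronecker_mulVec_vec 1 (S c) Bᵀ) i
  rw [← hP, Matrix.one_mul, transpose_transpose] at h
  exact h

theorem sum_smul_mul_pow_rev [CommSemiring R] [Fintype m] [Fintype n] [DecidableEq n] {k r : ℕ}
    (x : Fin k × Fin r → R) (S : Fin r → Matrix m m R) (X : Matrix m n R) (E : Matrix n n R) :
    ∑ c : Fin k × Fin r, x c • (S c.2 * (X * E ^ (k - 1 - (c.1 : ℕ)))) =
      ∑ i : Fin k, (∑ ℓ, x (i.rev, ℓ) • S ℓ) * X * E ^ (i : ℕ) := by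
  rw [Fintype.sum_prod_type, ← Equiv.sum_comp Fin.revPerm]
  refine Finset.sum_congr rfl fun i _ => ?_
  have hexp : k - 1 - (i.rev : ℕ) = i := by have := Fin.val_rev i; omega
  simp only [Fin.revPerm_apply, hexp, Matrix.sum_mul, Matrix.smul_mul, Matrix.mul_assoc]

end Matrix

theorem stmt_5_general (n m k r : ℕ)
    (S : Fin r → Matrix (Fin n) (Fin n) ℝ)
    (X : Matrix (Fin n) (Fin m) ℝ) (E : Matrix (Fin m) (Fin m) ℝ)
    (P : Matrix (Fin n × Fin n) (Fin r) ℝ)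
    (hP : ∀ ℓ : Fin r, (fun ji => P ji ℓ) = vecc (S ℓ))
    (U : Matrix (Fin m × Fin n) (Fin k × Fin r) ℝ)
    (hU : ∀ row col, U row col =
      (((X * E ^ (k - 1 - (col.1 : ℕ)))ᵀ ⊗ₖ (1 : Matrix (Fin n) (Fin n) ℝ)) * P) row col.2)
    (b : Fin m × Fin n → ℝ)
    (hb : b = vecc (-(X * E ^ k)))
    (Ud : Matrix (Fin k × Fin r) (Fin m × Fin n) ℝ)
    (hd1 : U * Ud * U = U) :
    (∃ α : Fin k → Fin r → ℝ,
        X * E ^ k + ∑ i : Fin k, (∑ ℓ : Fin r, α i ℓ • S ℓ) * X * E ^ (i : ℕ) = 0) ↔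
      U.mulVec (Ud.mulVec b) = b := by
  have hcol : ∀ row col, U row col = vec (S col.2 * (X * E ^ (k - 1 - (col.1 : ℕ)))) row :=
    fun row col => by rw [hU, kronecker_one_mul_apply_of_col_eq_vec hP]
  have hsolve : ∀ x, U *ᵥ x = b ↔
      X * E ^ k + ∑ i : Fin k, (∑ ℓ, x (i.rev, ℓ) • S ℓ) * X * E ^ (i : ℕ) = 0 := fun x => by
    rw [mulVec_eq_vec_sum_of_col_eq_vec hcol, hb, vecc_eq_vec, vec_inj, sum_smul_mul_pow_rev,
      eq_neg_iff_add_eq_zero, add_comm]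
  rw [← exists_mulVec_eq_iff_of_mul_mul_self hd1]
  constructor
  · rintro ⟨α, hα⟩
    exact ⟨fun c => α c.1.rev c.2, (hsolve _).2 (by simpa only [Fin.rev_rev] using hα)⟩
  · rintro ⟨x, hx⟩
    exact ⟨fun i ℓ => x (i.rev, ℓ), (hsolve x).1 hx⟩

theorem stmt_5 (n m k r : ℕ) (hn : 0 < n) (hm : 0 < m) (hk : 0 < k) (hr : 0 < r)
    (S : Fin r → Matrix (Fin n) (Fin n) ℝ)
    (X : Matrix (Fin n) (Fin m) ℝ) (E : Matrix (Fin m) (Fin m) ℝ)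
    (P : Matrix (Fin n × Fin n) (Fin r) ℝ)
    (hP : ∀ ℓ : Fin r, (fun ji => P ji ℓ) = vecc (S ℓ))
    (U : Matrix (Fin m × Fin n) (Fin k × Fin r) ℝ)
    (hU : ∀ row col, U row col =
      (((X * E ^ (k - 1 - (col.1 : ℕ)))ᵀ ⊗ₖ (1 : Matrix (Fin n) (Fin n) ℝ)) * P) row col.2)
    (b : Fin m × Fin n → ℝ)
    (hb : b = vecc (-(X * E ^ k)))
    (Ud : Matrix (Fin k × Fin r) (Fin m × Fin n) ℝ)
    (hd1 : U * Ud * U = U) (hd2 : Ud * U * Ud = Ud)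
    (hd3 : (U * Ud)ᵀ = U * Ud) (hd4 : (Ud * U)ᵀ = Ud * U) :
    (∃ α : Fin k → Fin r → ℝ,
        X * E ^ k + ∑ i : Fin k, (∑ ℓ : Fin r, α i ℓ • S ℓ) * X * E ^ (i : ℕ) = 0) ↔
      U.mulVec (Ud.mulVec b) = b :=
  stmt_5_general n m k r S X E P hP U hU b hb Ud hd1
end

section
/- Let A_0,…,A_k ∈ ℂ^{n×n} with A_k invertible and n ≥ 1, and consider P = Σ_{i=0}^{k} X^i • (A_i mapped entrywise into ℂ[X]). Then det(P) ∈ ℂ[X] is a nonzero polynomial whose multiset of roots (counted with multiplicity) has cardinality exactly k·n; in particular the matrix polynomial has exactly kn finite eigenvalues counted with multiplicity. -/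
/-!
Every entry of `P = ∑ Xⁱ • Aᵢ` has degree at most `k`, with `Xᵏ`-coefficient the corresponding
entry of `A_k`. Hence `det P` has degree at most `kn` and its `X^(kn)`-coefficient is
`det A_k ≠ 0`, so `det P` has degree exactly `kn`; over `ℂ` it splits, so it has `kn` roots.
-/

open Matrix Polynomial

namespace Matrix

variable {ι R : Type*} [CommRing R]

section MatrixPoly

noncomputable def matrixPoly {k : ℕ} (A : Fin (k + 1) → Matrix ι ι R) : Matrix ι ι R[X] :=
  ∑ m : Fin (k + 1), (X : R[X]) ^ (m : ℕ) • (A m).map C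

variable {k : ℕ} (A : Fin (k + 1) → Matrix ι ι R)

theorem matrixPoly_apply (i j : ι) :
    matrixPoly A i j = ∑ m : Fin (k + 1), C (A m i j) * X ^ (m : ℕ) := by
  simp only [matrixPoly, sum_apply, smul_apply, map_apply, smul_eq_mul]
  exact Finset.sum_congr rfl fun m _ => mul_comm _ _

theorem natDegree_matrixPoly_apply_le (i j : ι) : (matrixPoly A i j).natDegree ≤ k := by
  rw [matrixPoly_apply]
  exact natDegree_sum_le_of_forall_le _ _ fun m _ =>
    (natDegree_C_mul_X_pow_le _ _).trans (Nat.lt_succ_iff.mp m.isLt)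

theorem map_coeff_matrixPoly : (matrixPoly A).map (fun p => p.coeff k) = A (Fin.last k) := by
  ext i j
  rw [map_apply, matrixPoly_apply, finsetSum_coeff, Finset.sum_eq_single (Fin.last k)]
  · simp
  · intro m _ hm
    rw [coeff_C_mul_X_pow, if_neg fun h => hm (Fin.ext h.symm)]
  · simp

end MatrixPoly

variable [Fintype ι] [DecidableEq ι]

theorem natDegree_det_le_of_forall_natDegree_le {M : Matrix ι ι R[X]} {k : ℕ}
    (hM : ∀ i j, (M i j).natDegree ≤ k) : M.det.natDegree ≤ Fintype.card ι * k := by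
  rw [det_apply]
  refine natDegree_sum_le_of_forall_le _ _ fun σ _ => ?_
  calc (Equiv.Perm.sign σ • ∏ i, M (σ i) i).natDegree
      ≤ (∏ i, M (σ i) i).natDegree := natDegree_smul_le _ _
    _ ≤ ∑ i, (M (σ i) i).natDegree := natDegree_prod_le _ _
    _ ≤ ∑ _i : ι, k := Finset.sum_le_sum fun i _ => hM (σ i) i
    _ = Fintype.card ι * k := by simp

theorem coeff_det_of_forall_natDegree_le {M : Matrix ι ι R[X]} {k : ℕ}
    (hM : ∀ i j, (M i j).natDegree ≤ k) :
    M.det.coeff (Fintype.card ι * k) = (M.map fun p => p.coeff k).det := by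
  rw [det_apply, det_apply, finsetSum_coeff]
  refine Finset.sum_congr rfl fun σ _ => ?_
  rw [coeff_smul, ← Finset.card_univ, coeff_prod_of_natDegree_le _ _ _ fun i _ => hM (σ i) i]
  rfl

variable {k : ℕ} {A : Fin (k + 1) → Matrix ι ι R}

theorem coeff_det_matrixPoly :
    (matrixPoly A).det.coeff (Fintype.card ι * k) = (A (Fin.last k)).det := by
  rw [coeff_det_of_forall_natDegree_le (natDegree_matrixPoly_apply_le A), map_coeff_matrixPoly]

theorem det_matrixPoly_ne_zero (hA : (A (Fin.last k)).det ≠ 0) : (matrixPoly A).det ≠ 0 :=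
  fun h => hA (by rw [← coeff_det_matrixPoly, h, coeff_zero])

theorem natDegree_det_matrixPoly (hA : (A (Fin.last k)).det ≠ 0) :
    (matrixPoly A).det.natDegree = Fintype.card ι * k :=
  (natDegree_det_le_of_forall_natDegree_le (natDegree_matrixPoly_apply_le A)).antisymm
    (le_natDegree_of_ne_zero (by rwa [coeff_det_matrixPoly]))

theorem card_roots_det_matrixPoly {K : Type*} [Field K] [IsAlgClosed K]
    {A : Fin (k + 1) → Matrix ι ι K} (hA : (A (Fin.last k)).det ≠ 0) :
    (matrixPoly A).det.roots.card = Fintype.card ι * k := by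
  rw [← natDegree_det_matrixPoly hA, splits_iff_card_roots.mp (IsAlgClosed.splits _)]

end Matrix

theorem stmt_15_general (n k : ℕ) (A : Fin (k + 1) → Matrix (Fin n) (Fin n) ℂ)
    (hAk : Invertible (A (Fin.last k))) :
    (∑ i : Fin (k + 1), (Polynomial.X : ℂ[X]) ^ (i : ℕ) • (A i).map Polynomial.C).det ≠ 0 ∧
      (∑ i : Fin (k + 1),
        (Polynomial.X : ℂ[X]) ^ (i : ℕ) • (A i).map Polynomial.C).det.roots.card = k * n := by
  have hdet : (A (Fin.last k)).det ≠ 0 := (isUnit_det_of_invertible _).ne_zero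
  exact ⟨det_matrixPoly_ne_zero hdet,
    by simpa [matrixPoly, mul_comm] using card_roots_det_matrixPoly hdet⟩

theorem stmt_15 (n k : ℕ) (hn : 1 ≤ n) (A : Fin (k + 1) → Matrix (Fin n) (Fin n) ℂ)
    (hAk : Invertible (A (Fin.last k))) :
    (∑ i : Fin (k + 1), (Polynomial.X : ℂ[X]) ^ (i : ℕ) • (A i).map Polynomial.C).det ≠ 0 ∧
      (∑ i : Fin (k + 1),
        (Polynomial.X : ℂ[X]) ^ (i : ℕ) • (A i).map Polynomial.C).det.roots.card = k * n :=
  stmt_15_general n k A hAk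
end
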